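/- Let T be a non-singular measurable transformation with Radon–Nikodym derivative f₀, and let Φ₂ ∈ Δ' be a Young function with constant c ≥ 1. Then for every f in the domain of C_T in L^{Φ₁}(Σ), ‖M_{Φ₂⁻¹(f₀)} f‖_{Φ₂} ≤ c‖C_T f‖_{Φ₂}. -/
import Mathlib


open MeasureTheory Filter Topology

/-- A Young function: continuous, convex, even, vanishing exactly at 0,
with superlinear growth at infinity. -/
structure YoungFunction where
  toFun : ℝ → ℝ
  continuous' : Continuous toFun
  convexOn' : ConvexOn ℝ Set.univ toFun
  even' : ∀ x, toFun (-x) = toFun x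
  zero_iff' : ∀ x, toFun x = 0 ↔ x = 0
  tendsto_atTop' : Tendsto (fun x => toFun x / x) atTop atTop

instance : CoeFun YoungFunction fun _ => ℝ → ℝ := ⟨YoungFunction.toFun⟩

variable {X : Type*} [MeasurableSpace X]

/-- Membership in the Orlicz space `L^Φ(μ)`. -/
def MemOrlicz (Φ : YoungFunction) (μ : Measure X) (f : X → ℝ) : Prop :=
  AEStronglyMeasurable f μ ∧ ∃ k > 0, Integrable (fun x => Φ (k * f x)) μ

/-- The Luxemburg norm on the Orlicz space `L^Φ(μ)`. -/
noncomputable def luxNorm (Φ : YoungFunction) (μ : Measure X) (f : X → ℝ) : ℝ :=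
  sInf {k : ℝ | 0 < k ∧ ∫ x, Φ (f x / k) ∂μ ≤ 1}

/-- The generalized (right) inverse of a Young function on `[0,∞)`. -/
noncomputable def yInv (Φ : YoungFunction) (y : ℝ) : ℝ :=
  sSup {x : ℝ | 0 ≤ x ∧ Φ x ≤ y}

/-- `Φ` satisfies the `Δ₂` condition globally. -/
def YoungDeltaTwo (Φ : YoungFunction) : Prop :=
  ∃ k > 0, ∀ x : ℝ, 0 ≤ x → Φ (2 * x) ≤ k * Φ x

/-- `Φ` satisfies the `Δ'` condition globally, with constant `c`. -/
def YoungDeltaPrime (Φ : YoungFunction) (c : ℝ) : Prop :=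
  0 < c ∧ ∀ x y : ℝ, 0 ≤ x → 0 ≤ y → Φ (x * y) ≤ c * Φ x * Φ y

/-- `Φ` satisfies the `∇'` condition globally, with constant `b`. -/
def YoungNablaPrime (Φ : YoungFunction) (b : ℝ) : Prop :=
  0 < b ∧ ∀ x y : ℝ, 0 ≤ x → 0 ≤ y → Φ x * Φ y ≤ Φ (b * x * y)

/-- `Φ ≺ Ψ` : `Φ` is weaker than `Ψ`. -/
def YoungWeaker (Φ Ψ : YoungFunction) : Prop :=
  ∃ a > 0, ∃ x₀ : ℝ, 0 ≤ x₀ ∧ ∀ x : ℝ, x₀ ≤ x → Φ x ≤ Ψ (a * x)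

/-- `A` is an atom of the measure `μ`. -/
def IsAtomSet (μ : Measure X) (A : Set X) : Prop :=
  MeasurableSet A ∧ 0 < μ A ∧
    ∀ B : Set X, MeasurableSet B → B ⊆ A → μ B = 0 ∨ μ B = μ A

/-- `μ` is non-atomic on the set `S`. -/
def NonAtomicOn (μ : Measure X) (S : Set X) : Prop :=
  ∀ A : Set X, A ⊆ S → ¬ IsAtomSet μ A

/-- A linear map between Orlicz spaces (given as a map on functions) is bounded. -/
def OrliczBounded (Φ₁ Φ₂ : YoungFunction) (μ : Measure X)
    (Tmap : (X → ℝ) → (X → ℝ)) : Prop :=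
  ∃ C > 0, ∀ f : X → ℝ, MemOrlicz Φ₁ μ f →
    MemOrlicz Φ₂ μ (Tmap f) ∧ luxNorm Φ₂ μ (Tmap f) ≤ C * luxNorm Φ₁ μ f

/-- The atomic decomposition of a σ-finite measure space: `X = (⋃ n, A n) ∪ B`
with the `A n` pairwise disjoint atoms of finite measure and `B` non-atomic. -/
def AtomicDecomposition (μ : Measure X) (A : ℕ → Set X) (B : Set X) : Prop :=
  (∀ n, IsAtomSet μ (A n)) ∧ (∀ n, μ (A n) < ⊤) ∧
    Pairwise (Function.onFun Disjoint A) ∧ (∀ n, Disjoint (A n) B) ∧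
    MeasurableSet B ∧ NonAtomicOn μ B ∧ (⋃ n, A n) ∪ B = Set.univ

namespace YoungFunction

lemma zero (Φ : YoungFunction) : Φ 0 = 0 := (Φ.zero_iff' 0).2 rfl

lemma nonneg (Φ : YoungFunction) (x : ℝ) : 0 ≤ Φ x := by
  have h := Φ.convexOn'.2 (Set.mem_univ x) (Set.mem_univ (-x))
    (by norm_num : (0:ℝ) ≤ 1/2) (by norm_num : (0:ℝ) ≤ 1/2) (by norm_num)
  simp only [smul_eq_mul] at h
  have hx : (1/2:ℝ) * x + (1/2:ℝ) * (-x) = 0 := by ring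
  rw [hx, Φ.zero, Φ.even'] at h
  linarith

lemma smul_le (Φ : YoungFunction) {t : ℝ} (z : ℝ) (h0 : 0 ≤ t) (h1 : t ≤ 1) :
    Φ (t * z) ≤ t * Φ z := by
  have h := Φ.convexOn'.2 (Set.mem_univ z) (Set.mem_univ 0) h0
    (by linarith : (0:ℝ) ≤ 1 - t) (by ring)
  simp only [smul_eq_mul] at h
  have hx : t * z + (1 - t) * (0:ℝ) = t * z := by ring
  rw [hx, Φ.zero] at h
  linarith [h]

lemma mono (Φ : YoungFunction) {x y : ℝ} (hx : 0 ≤ x) (hxy : x ≤ y) : Φ x ≤ Φ y := by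
  rcases eq_or_lt_of_le (hx.trans hxy) with h | hy
  · have hx0 : x = 0 := le_antisymm (hxy.trans h.symm.le) hx
    rw [hx0, ← h]
  · have ht0 : 0 ≤ x / y := div_nonneg hx hy.le
    have ht1 : x / y ≤ 1 := (div_le_one hy).2 hxy
    have := Φ.smul_le y ht0 ht1
    rw [div_mul_cancel₀ _ hy.ne'] at this
    nlinarith [Φ.nonneg y]

lemma abs_eq (Φ : YoungFunction) (x : ℝ) : Φ |x| = Φ x := by
  rcases abs_cases x with ⟨h, _⟩ | ⟨h, _⟩
  · rw [h]
  · rw [h, Φ.even']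

lemma bddAbove_set (Φ : YoungFunction) (y : ℝ) :
    BddAbove {x : ℝ | 0 ≤ x ∧ Φ x ≤ y} := by
  have h := Φ.tendsto_atTop'.eventually_gt_atTop y
  rw [eventually_atTop] at h
  obtain ⟨M, hM⟩ := h
  refine ⟨max M 1, fun x hx => ?_⟩
  by_contra hgt
  push_neg at hgt
  have hxM : M ≤ x := le_of_lt (lt_of_le_of_lt (le_max_left _ _) hgt)
  have hx1 : (1:ℝ) < x := lt_of_le_of_lt (le_max_right _ _) hgt
  have h1 := hM x hxM
  have hx0 : (0:ℝ) < x := by linarith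
  have : y * x < Φ x := (lt_div_iff₀ hx0).1 h1
  rcases le_or_gt 0 y with hy | hy
  · nlinarith [hx.2]
  · nlinarith [hx.2, Φ.nonneg x]

lemma yInv_nonneg_and_le (Φ : YoungFunction) {y : ℝ} (hy : 0 ≤ y) :
    0 ≤ yInv Φ y ∧ Φ (yInv Φ y) ≤ y := by
  have hne : Set.Nonempty {x : ℝ | 0 ≤ x ∧ Φ x ≤ y} :=
    ⟨0, le_refl 0, by rw [Φ.zero]; exact hy⟩
  have hcl : IsClosed {x : ℝ | 0 ≤ x ∧ Φ x ≤ y} := by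
    have : {x : ℝ | 0 ≤ x ∧ Φ x ≤ y} =
        {x : ℝ | 0 ≤ x} ∩ {x : ℝ | Φ x ≤ y} := rfl
    rw [this]
    exact (isClosed_le continuous_const continuous_id).inter
      (isClosed_le Φ.continuous' continuous_const)
  have hmem := hcl.csSup_mem hne (Φ.bddAbove_set y)
  exact hmem

lemma yInv_nonneg (Φ : YoungFunction) (y : ℝ) : 0 ≤ yInv Φ y := by
  rcases le_or_gt 0 y with hy | hy
  · exact (Φ.yInv_nonneg_and_le hy).1
  · have : {x : ℝ | 0 ≤ x ∧ Φ x ≤ y} = ∅ := by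
      ext x; simp only [Set.mem_setOf_eq, Set.mem_empty_iff_false, iff_false, not_and, not_le]
      intro hx; exact lt_of_lt_of_le hy (Φ.nonneg x)
    rw [yInv, this, Real.sSup_empty]

lemma yInv_measurable (Φ : YoungFunction) : Measurable (yInv Φ) := by
  have hmono : Monotone (yInv Φ) := by
    intro a b hab
    rcases le_or_gt 0 a with ha | ha
    · refine csSup_le_csSup (Φ.bddAbove_set b) ⟨0, le_refl 0, by rw [Φ.zero]; exact ha⟩ ?_
      intro x hx; exact ⟨hx.1, hx.2.trans hab⟩
    · have : {x : ℝ | 0 ≤ x ∧ Φ x ≤ a} = ∅ := by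
        ext x; simp only [Set.mem_setOf_eq, Set.mem_empty_iff_false, iff_false, not_and, not_le]
        intro hx; exact lt_of_lt_of_le ha (Φ.nonneg x)
      have h0 : yInv Φ a = 0 := by rw [yInv, this, Real.sSup_empty]
      rw [h0]; exact Φ.yInv_nonneg b
  exact hmono.measurable

end YoungFunction

/-- `‖M_{Φ₂⁻¹(f₀)} f‖_{Φ₂} ≤ c ‖C_T f‖_{Φ₂}` when `Φ₂ ∈ Δ'`. -/
theorem luxNorm_mul_le_comp
    {X : Type*} [MeasurableSpace X] (μ : Measure X)
    (Φ₁ Φ₂ : YoungFunction) (c : ℝ) (hc : 1 ≤ c) (hΦ₂ : YoungDeltaPrime Φ₂ c)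
    (T : X → X) (hT : Measurable T) (hns : μ.map T ≪ μ)
    (f₀ : X → ℝ) (hf₀m : Measurable f₀) (hf₀nn : ∀ x, 0 ≤ f₀ x)
    (hf₀ : ∀ S : Set X, MeasurableSet S →
      μ.map T S = ∫⁻ x in S, ENNReal.ofReal (f₀ x) ∂μ)
    (f : X → ℝ) (hf : MemOrlicz Φ₁ μ f)
    (hfd : MemOrlicz Φ₂ μ (fun x => f (T x))) :
    luxNorm Φ₂ μ (fun x => yInv Φ₂ (f₀ x) * f x) ≤
      c * luxNorm Φ₂ μ (fun x => f (T x)) := by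
  obtain ⟨hcpos, hΔ⟩ := hΦ₂
  obtain ⟨hCTm, k₀, hk₀, hk₀int⟩ := hfd
  set SC := {k : ℝ | 0 < k ∧ ∫ x, Φ₂ (f (T x) / k) ∂μ ≤ 1} with hSCdef
  set SM := {k : ℝ | 0 < k ∧ ∫ x, Φ₂ (yInv Φ₂ (f₀ x) * f x / k) ∂μ ≤ 1} with hSMdef
  have hdivm : ∀ (g : X → ℝ), AEStronglyMeasurable g μ → ∀ k : ℝ,
      AEStronglyMeasurable (fun x => g x / k) μ := by
    intro g hg k
    simpa [div_eq_mul_inv] using hg.mul_const k⁻¹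
  -- (A) integrability of the composition integrand at every scale
  have hintA : ∀ k : ℝ, 0 < k → Integrable (fun x => Φ₂ (f (T x) / k)) μ := by
    intro k hk
    have hmeas : AEStronglyMeasurable (fun x => Φ₂ (f (T x) / k)) μ :=
      Φ₂.continuous'.comp_aestronglyMeasurable (hdivm _ hCTm k)
    refine Integrable.mono' (hk₀int.const_mul (c * Φ₂ (1 / (k * k₀)))) hmeas ?_
    refine Filter.Eventually.of_forall (fun x => ?_)
    rw [Real.norm_eq_abs, abs_of_nonneg (Φ₂.nonneg _)]
    calc Φ₂ (f (T x) / k) = Φ₂ |f (T x) / k| := (Φ₂.abs_eq _).symm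
      _ = Φ₂ ((1 / (k * k₀)) * (k₀ * |f (T x)|)) := by
          congr 1
          rw [abs_div, abs_of_pos hk]
          field_simp
      _ ≤ c * Φ₂ (1 / (k * k₀)) * Φ₂ (k₀ * |f (T x)|) :=
          hΔ _ _ (by positivity) (by positivity)
      _ = c * Φ₂ (1 / (k * k₀)) * Φ₂ (k₀ * f (T x)) := by
          rw [← Φ₂.abs_eq (k₀ * f (T x)), abs_mul, abs_of_pos hk₀]
  -- (B) map T = withDensity f₀
  have hmap : μ.map T = μ.withDensity (fun x => ENNReal.ofReal (f₀ x)) :=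
    Measure.ext fun s hs => by rw [hf₀ s hs, withDensity_apply _ hs]
  -- (C) change of variables for lintegrals
  have hCoV : ∀ k : ℝ, 0 < k →
      ∫⁻ x, ENNReal.ofReal (f₀ x) * ENNReal.ofReal (Φ₂ (f x / k)) ∂μ
        = ∫⁻ x, ENNReal.ofReal (Φ₂ (f (T x) / k)) ∂μ := by
    intro k hk
    have hfae : AEMeasurable f μ := hf.1.aemeasurable
    have hac : μ.withDensity (fun x => ENNReal.ofReal (f₀ x)) ≪ μ :=
      withDensity_absolutelyContinuous _ _
    have hφk : AEMeasurable (fun x => ENNReal.ofReal (Φ₂ (f x / k)))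
        (μ.withDensity (fun x => ENNReal.ofReal (f₀ x))) :=
      (ENNReal.measurable_ofReal.comp Φ₂.continuous'.measurable).comp_aemeasurable
        ((hfae.mono_ac hac).div_const k)
    calc ∫⁻ x, ENNReal.ofReal (f₀ x) * ENNReal.ofReal (Φ₂ (f x / k)) ∂μ
        = ∫⁻ x, ENNReal.ofReal (Φ₂ (f x / k))
            ∂(μ.withDensity (fun x => ENNReal.ofReal (f₀ x))) := by
          rw [lintegral_withDensity_eq_lintegral_mul₀'
            (hf₀m.ennreal_ofReal.aemeasurable) hφk]
          simp only [Pi.mul_apply]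
      _ = ∫⁻ x, ENNReal.ofReal (Φ₂ (f x / k)) ∂(μ.map T) := by rw [hmap]
      _ = ∫⁻ x, ENNReal.ofReal (Φ₂ (f (T x) / k)) ∂μ :=
          lintegral_map' (by rw [hmap]; exact hφk) hT.aemeasurable
  -- (D) pointwise inequality
  have hpt : ∀ k : ℝ, 0 < k → ∀ x,
      Φ₂ (yInv Φ₂ (f₀ x) * f x / (c * k)) ≤ f₀ x * Φ₂ (f x / k) := by
    intro k hk x
    obtain ⟨ha0, haφ⟩ := Φ₂.yInv_nonneg_and_le (hf₀nn x)
    set a := yInv Φ₂ (f₀ x) with ha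
    have h1 : a * f x / (c * k) = (1/c) * (a * f x / k) := by
      field_simp
    have h2 : Φ₂ ((1/c) * (a * f x / k)) ≤ (1/c) * Φ₂ (a * f x / k) :=
      Φ₂.smul_le _ (by positivity) (by rw [div_le_one hcpos]; exact hc)
    have h3 : Φ₂ (a * f x / k) ≤ c * Φ₂ a * Φ₂ (f x / k) := by
      calc Φ₂ (a * f x / k) = Φ₂ |a * f x / k| := (Φ₂.abs_eq _).symm
        _ = Φ₂ (a * (|f x| / k)) := by
            congr 1
            rw [abs_div, abs_mul, abs_of_nonneg ha0, abs_of_pos hk, mul_div_assoc]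
        _ ≤ c * Φ₂ a * Φ₂ (|f x| / k) := hΔ _ _ ha0 (by positivity)
        _ = c * Φ₂ a * Φ₂ (f x / k) := by
            rw [← Φ₂.abs_eq (f x / k), abs_div, abs_of_pos hk]
    have hφnn := Φ₂.nonneg (f x / k)
    calc Φ₂ (a * f x / (c * k)) = Φ₂ ((1/c) * (a * f x / k)) := by rw [h1]
      _ ≤ (1/c) * Φ₂ (a * f x / k) := h2
      _ ≤ (1/c) * (c * Φ₂ a * Φ₂ (f x / k)) :=
          mul_le_mul_of_nonneg_left h3 (by positivity)
      _ = Φ₂ a * Φ₂ (f x / k) := by field_simp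
      _ ≤ f₀ x * Φ₂ (f x / k) := mul_le_mul_of_nonneg_right haφ hφnn
  -- (E) main step
  have key : ∀ k ∈ SC, sInf SM ≤ c * k := by
    intro k hk
    obtain ⟨hkpos, hkint⟩ := hk
    have hckpos : 0 < c * k := mul_pos hcpos hkpos
    have hbdd : BddBelow SM := ⟨0, fun x hx => hx.1.le⟩
    refine csInf_le hbdd ⟨hckpos, ?_⟩
    have hMm : AEStronglyMeasurable
        (fun x => Φ₂ (yInv Φ₂ (f₀ x) * f x / (c * k))) μ :=
      Φ₂.continuous'.comp_aestronglyMeasurable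
        (hdivm _ (((Φ₂.yInv_measurable.comp hf₀m).aestronglyMeasurable).mul hf.1) _)
    have heq : ∫ x, Φ₂ (yInv Φ₂ (f₀ x) * f x / (c * k)) ∂μ
        = (∫⁻ x, ENNReal.ofReal (Φ₂ (yInv Φ₂ (f₀ x) * f x / (c * k))) ∂μ).toReal :=
      integral_eq_lintegral_of_nonneg_ae
        (Filter.Eventually.of_forall fun x => Φ₂.nonneg _) hMm
    have hL1 : ∫⁻ x, ENNReal.ofReal (Φ₂ (yInv Φ₂ (f₀ x) * f x / (c * k))) ∂μ ≤ 1 := by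
      calc ∫⁻ x, ENNReal.ofReal (Φ₂ (yInv Φ₂ (f₀ x) * f x / (c * k))) ∂μ
          ≤ ∫⁻ x, ENNReal.ofReal (f₀ x) * ENNReal.ofReal (Φ₂ (f x / k)) ∂μ := by
            refine lintegral_mono fun x => ?_
            rw [← ENNReal.ofReal_mul (hf₀nn x)]
            exact ENNReal.ofReal_le_ofReal (hpt k hkpos x)
        _ = ∫⁻ x, ENNReal.ofReal (Φ₂ (f (T x) / k)) ∂μ := hCoV k hkpos
        _ = ENNReal.ofReal (∫ x, Φ₂ (f (T x) / k) ∂μ) :=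
            (ofReal_integral_eq_lintegral_ofReal (hintA k hkpos)
              (Filter.Eventually.of_forall fun x => Φ₂.nonneg _)).symm
        _ ≤ ENNReal.ofReal 1 := ENNReal.ofReal_le_ofReal hkint
        _ = 1 := ENNReal.ofReal_one
    rw [heq]
    have hfin := ENNReal.toReal_mono ENNReal.one_ne_top hL1
    simpa using hfin
  -- (F) SC is nonempty
  have hSCne : SC.Nonempty := by
    set I := ∫ x, Φ₂ (k₀ * f (T x)) ∂μ with hI
    have hInn : 0 ≤ I := integral_nonneg fun x => Φ₂.nonneg _
    set ε := min 1 (1/(I+1)) with hε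
    have hε0 : 0 < ε := lt_min one_pos (by positivity)
    have hε1 : ε ≤ 1 := min_le_left _ _
    refine ⟨(ε * k₀)⁻¹, by positivity, ?_⟩
    have hle : ∀ x, Φ₂ (f (T x) / (ε * k₀)⁻¹) ≤ ε * Φ₂ (k₀ * f (T x)) := by
      intro x
      have hrw : f (T x) / (ε * k₀)⁻¹ = ε * (k₀ * f (T x)) := by
        rw [div_eq_mul_inv, inv_inv]; ring
      rw [hrw]
      exact Φ₂.smul_le _ hε0.le hε1
    have hint1 : Integrable (fun x => Φ₂ (f (T x) / (ε * k₀)⁻¹)) μ :=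
      hintA _ (by positivity)
    calc ∫ x, Φ₂ (f (T x) / (ε * k₀)⁻¹) ∂μ
        ≤ ∫ x, ε * Φ₂ (k₀ * f (T x)) ∂μ :=
          integral_mono hint1 (hk₀int.const_mul ε) hle
      _ = ε * I := by rw [integral_const_mul]
      _ ≤ (1/(I+1)) * I :=
          mul_le_mul_of_nonneg_right (min_le_right _ _) hInn
      _ ≤ 1 := by
          rw [div_mul_eq_mul_div]
          exact (div_le_one (by positivity)).2 (by nlinarith)
  -- conclusion
  have h2 : sInf SM / c ≤ sInf SC := by
    refine le_csInf hSCne fun k hk => ?_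
    rw [div_le_iff₀ hcpos]
    calc sInf SM ≤ c * k := key k hk
      _ = k * c := mul_comm _ _
  have hgoal : sInf SM ≤ c * sInf SC := by
    calc sInf SM = c * (sInf SM / c) := by field_simp
      _ ≤ c * sInf SC := mul_le_mul_of_nonneg_left h2 hcpos.le
  have e1 : luxNorm Φ₂ μ (fun x => yInv Φ₂ (f₀ x) * f x) = sInf SM := rfl
  have e2 : luxNorm Φ₂ μ (fun x => f (T x)) = sInf SC := rfl
  rw [e1, e2]
  exact hgoal
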